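/- Let n ≥ 1 and 0 ≤ i ≤ n. If p and q are real polynomials such that 𝔅̄ₙp(x) = b_{n,i}(x) and 𝔅̄ₙq(x) = b_{n,n−i}(x) for all x ∈ [0,1], then p(x) = q(1−x) for all x ∈ [0,1]. (In the notation φ_{n,i} = 𝔅̄ₙ⁻¹b_{n,i}, this says φ_{n,i}(x) = φ_{n,n−i}(1−x).) -/

import Mathlib

open MeasureTheory Polynomial

/-- The Beta operator of Mühlbach and Lupaş on `C[0,1]`. -/
noncomputable def betaOp (n : ℕ) (f : ℝ → ℝ) (x : ℝ) : ℝ :=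
  if x = 0 then f 0
  else if x = 1 then f 1
  else (∫ t in (0:ℝ)..1, t ^ ((n:ℝ) * x - 1) * (1 - t) ^ ((n:ℝ) * (1 - x) - 1) * f t) /
       (∫ t in (0:ℝ)..1, t ^ ((n:ℝ) * x - 1) * (1 - t) ^ ((n:ℝ) * (1 - x) - 1))

/-- The Bernstein basis polynomial `b_{n,k}(x) = C(n,k) x^k (1-x)^{n-k}`. -/
noncomputable def bernsteinBasis (n k : ℕ) (x : ℝ) : ℝ :=
  (n.choose k) * x ^ k * (1 - x) ^ (n - k)

/-! On polynomials the Beta operator is explicit. Since `B(a + k, b) = B(a, b) (a)ₖ / (a + b)ₖ`,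
it sends `tᵏ` to the degree-`k` polynomial `(n x)ₖ / (n)ₖ`, so it is injective on `ℝ[X]`.
The substitution `t ↦ 1 - t` in the defining integral gives
`𝔅̄ₙ(f ∘ (1 - ·))(x) = 𝔅̄ₙ f (1 - x)`, and `b_{n,n-i}(1 - x) = b_{n,i}(x)`; hence `p` and
`q ∘ (1 - ·)` have the same image and coincide. -/

section BetaIntegral

variable {a b : ℝ}

theorem integral_rpow_mul_one_sub_rpow (ha : 0 < a) (hb : 0 < b) :
    ∫ t in (0:ℝ)..1, t ^ (a - 1) * (1 - t) ^ (b - 1) = ProbabilityTheory.beta a b := by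
  have hC : ((∫ t in (0:ℝ)..1, t ^ (a - 1) * (1 - t) ^ (b - 1) : ℝ) : ℂ)
      = Complex.betaIntegral a b := by
    rw [← intervalIntegral.integral_ofReal, Complex.betaIntegral]
    refine intervalIntegral.integral_congr fun t ht => ?_
    rw [Set.uIcc_of_le zero_le_one] at ht
    rw [Complex.ofReal_mul, Complex.ofReal_cpow ht.1, Complex.ofReal_cpow (sub_nonneg.2 ht.2)]
    push_cast
    ring
  rw [ProbabilityTheory.beta_eq_betaIntegralReal a b ha hb, ← hC, Complex.ofReal_re]

theorem intervalIntegrable_rpow_mul_one_sub_rpow (ha : 0 < a) (hb : 0 < b) :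
    IntervalIntegrable (fun t : ℝ => t ^ (a - 1) * (1 - t) ^ (b - 1)) volume 0 1 :=
  intervalIntegral.intervalIntegrable_of_integral_ne_zero <| by
    rw [integral_rpow_mul_one_sub_rpow ha hb]
    exact (ProbabilityTheory.beta_pos ha hb).ne'

theorem Real.Gamma_add_nat_eq_mul_ascPochhammer (ha : 0 < a) (k : ℕ) :
    Real.Gamma (a + k) = Real.Gamma a * (ascPochhammer ℝ k).eval a := by
  induction k with
  | zero => simp
  | succ k ih =>
    rw [Nat.cast_succ, ← add_assoc, Real.Gamma_add_one (by positivity), ih,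
      ascPochhammer_succ_eval]
    ring

theorem ProbabilityTheory.beta_add_nat (ha : 0 < a) (hb : 0 < b) (k : ℕ) :
    beta (a + k) b
      = beta a b * (ascPochhammer ℝ k).eval a / (ascPochhammer ℝ k).eval (a + b) := by
  have hab : 0 < a + b := add_pos ha hb
  have hGamma := (Real.Gamma_pos_of_pos hab).ne'
  have hpoch := (ascPochhammer_pos k _ hab).ne'
  rw [beta, beta, add_right_comm, Real.Gamma_add_nat_eq_mul_ascPochhammer ha,
    Real.Gamma_add_nat_eq_mul_ascPochhammer hab]
  field_simp

theorem integral_rpow_mul_one_sub_rpow_mul_pow (ha : 0 < a) (hb : 0 < b) (k : ℕ) :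
    ∫ t in (0:ℝ)..1, t ^ (a - 1) * (1 - t) ^ (b - 1) * t ^ k
      = ProbabilityTheory.beta a b * (ascPochhammer ℝ k).eval a
          / (ascPochhammer ℝ k).eval (a + b) := by
  rw [← ProbabilityTheory.beta_add_nat ha hb, ← integral_rpow_mul_one_sub_rpow (by positivity) hb]
  refine intervalIntegral.integral_congr_ae (Filter.Eventually.of_forall fun t ht => ?_)
  rw [Set.uIoc_of_le zero_le_one] at ht
  rw [mul_right_comm, ← Real.rpow_natCast, ← Real.rpow_add ht.1]
  ring_nf

theorem integral_rpow_mul_one_sub_rpow_mul_eval (ha : 0 < a) (hb : 0 < b) (p : ℝ[X]) :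
    ∫ t in (0:ℝ)..1, t ^ (a - 1) * (1 - t) ^ (b - 1) * p.eval t
      = ∑ k ∈ p.support, p.coeff k * (ProbabilityTheory.beta a b * (ascPochhammer ℝ k).eval a
          / (ascPochhammer ℝ k).eval (a + b)) := by
  conv_lhs => simp only [eval_eq_sum, sum_def, Finset.mul_sum]
  rw [intervalIntegral.integral_finsetSum fun k _ =>
    (intervalIntegrable_rpow_mul_one_sub_rpow ha hb).mul_continuousOn (by fun_prop)]
  refine Finset.sum_congr rfl fun k _ => ?_
  rw [← integral_rpow_mul_one_sub_rpow_mul_pow ha hb k, ← intervalIntegral.integral_const_mul]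
  exact intervalIntegral.integral_congr fun t _ => by ring

end BetaIntegral

theorem integral_rpow_mul_one_sub_rpow_mul_comp_one_sub (a b : ℝ) (f : ℝ → ℝ) :
    ∫ t in (0:ℝ)..1, t ^ a * (1 - t) ^ b * f (1 - t)
      = ∫ t in (0:ℝ)..1, t ^ b * (1 - t) ^ a * f t := by
  simpa [mul_comm (_ ^ a)] using intervalIntegral.integral_comp_sub_left (a := 0) (b := 1)
    (fun t => t ^ b * (1 - t) ^ a * f t) (1:ℝ)

theorem betaOp_comp_one_sub (n : ℕ) (f : ℝ → ℝ) (x : ℝ) :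
    betaOp n (fun t => f (1 - t)) x = betaOp n f (1 - x) := by
  by_cases hx0 : x = 0
  · simp [betaOp, hx0]
  by_cases hx1 : x = 1
  · simp [betaOp, hx1]
  have hx0' : 1 - x ≠ 1 := by contrapose! hx0; linarith
  have hx1' : 1 - x ≠ 0 := sub_ne_zero.2 (Ne.symm hx1)
  simp only [betaOp, if_neg hx0, if_neg hx1, if_neg hx0', if_neg hx1', sub_sub_cancel]
  congr 1
  · exact integral_rpow_mul_one_sub_rpow_mul_comp_one_sub _ _ f
  · simpa using integral_rpow_mul_one_sub_rpow_mul_comp_one_sub _ _ (fun _ => 1)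

noncomputable def betaOpMonomial (n k : ℕ) : ℝ[X] :=
  C ((ascPochhammer ℝ k).eval (n:ℝ))⁻¹ * (ascPochhammer ℝ k).comp (C (n:ℝ) * X)

theorem eval_betaOpMonomial (n k : ℕ) (x : ℝ) :
    (betaOpMonomial n k).eval x
      = (ascPochhammer ℝ k).eval (n * x) / (ascPochhammer ℝ k).eval (n:ℝ) := by
  simp [betaOpMonomial, eval_comp, div_eq_inv_mul]

theorem degree_betaOpMonomial {n : ℕ} (hn : n ≠ 0) (k : ℕ) : (betaOpMonomial n k).degree = k := by
  have hn' : (n:ℝ) ≠ 0 := Nat.cast_ne_zero.2 hn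
  have hpos := (ascPochhammer_pos k (n:ℝ) (by positivity)).ne'
  have hne : (ascPochhammer ℝ k).comp (C (n:ℝ) * X) ≠ 0 := fun h =>
    hpos (by simpa [eval_comp] using congr_arg (eval 1) h)
  rw [betaOpMonomial, degree_C_mul (inv_ne_zero hpos), degree_eq_natDegree hne, natDegree_comp,
    ascPochhammer_natDegree, natDegree_C_mul_X _ hn', mul_one]

theorem linearIndependent_betaOpMonomial {n : ℕ} (hn : n ≠ 0) :
    LinearIndependent ℝ (betaOpMonomial n) :=
  Sequence.linearIndependent ⟨betaOpMonomial n, degree_betaOpMonomial hn⟩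

noncomputable def betaOpPoly (n : ℕ) : ℝ[X] →ₗ[ℝ] ℝ[X] :=
  lsum fun k => LinearMap.toSpanSingleton ℝ ℝ[X] (betaOpMonomial n k)

theorem betaOpPoly_apply (n : ℕ) (p : ℝ[X]) :
    betaOpPoly n p = ∑ k ∈ p.support, p.coeff k • betaOpMonomial n k := rfl

theorem betaOpPoly_injective {n : ℕ} (hn : n ≠ 0) : Function.Injective (betaOpPoly n) := by
  refine (injective_iff_map_eq_zero _).2 fun p hp => ?_
  have hcoeff :=
    linearIndependent_iff'.1 (linearIndependent_betaOpMonomial hn) p.support p.coeff hp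
  ext k
  by_cases hk : k ∈ p.support
  · exact hcoeff k hk
  · exact notMem_support_iff.1 hk

theorem betaOp_eval_eq_eval_betaOpPoly {n : ℕ} (hn : n ≠ 0) (p : ℝ[X]) {x : ℝ}
    (hx : x ∈ Set.Ioo 0 1) : betaOp n (fun t => p.eval t) x = (betaOpPoly n p).eval x := by
  obtain ⟨hx0, hx1⟩ := hx
  have ha : 0 < (n:ℝ) * x := by positivity
  have hb : 0 < (n:ℝ) * (1 - x) := mul_pos (by positivity) (sub_pos.2 hx1)
  have hab : (n:ℝ) * x + n * (1 - x) = n := by ring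
  have hbeta := (ProbabilityTheory.beta_pos ha hb).ne'
  rw [betaOp, if_neg hx0.ne', if_neg hx1.ne, integral_rpow_mul_one_sub_rpow_mul_eval ha hb,
    integral_rpow_mul_one_sub_rpow ha hb, hab, betaOpPoly_apply, eval_finsetSum, Finset.sum_div]
  refine Finset.sum_congr rfl fun k _ => ?_
  rw [eval_smul, eval_betaOpMonomial, smul_eq_mul]
  field_simp

theorem bernsteinBasis_sub_one_sub {n i : ℕ} (hi : i ≤ n) (x : ℝ) :
    bernsteinBasis n (n - i) (1 - x) = bernsteinBasis n i x := by
  rw [bernsteinBasis, bernsteinBasis, Nat.choose_symm hi, Nat.sub_sub_self hi, sub_sub_cancel]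
  ring

/-- Symmetry of the polynomials `φ_{n,i} = 𝔅̄ₙ⁻¹ b_{n,i}`:
`φ_{n,i}(x) = φ_{n,n-i}(1-x)`. -/
theorem inv_betaOp_bernsteinBasis_symm (n : ℕ) (hn : 1 ≤ n) (i : ℕ) (hi : i ≤ n)
    (p q : Polynomial ℝ)
    (hp : ∀ x ∈ Set.Icc (0:ℝ) 1, betaOp n (fun t => p.eval t) x = bernsteinBasis n i x)
    (hq : ∀ x ∈ Set.Icc (0:ℝ) 1, betaOp n (fun t => q.eval t) x = bernsteinBasis n (n - i) x) :
    ∀ x ∈ Set.Icc (0:ℝ) 1, p.eval x = q.eval (1 - x) := by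
  have hn0 : n ≠ 0 := Nat.one_le_iff_ne_zero.1 hn
  set r : ℝ[X] := q.comp (1 - X)
  have hr : ∀ t, r.eval t = q.eval (1 - t) := fun t => by simp [r, eval_comp]
  have hagree : ∀ x ∈ Set.Ioo (0:ℝ) 1, (betaOpPoly n p).eval x = (betaOpPoly n r).eval x := by
    intro x hx
    have hx' : 1 - x ∈ Set.Icc (0:ℝ) 1 := ⟨by linarith [hx.2], by linarith [hx.1]⟩
    rw [← betaOp_eval_eq_eval_betaOpPoly hn0 p hx, ← betaOp_eval_eq_eval_betaOpPoly hn0 r hx,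
      hp x (Set.Ioo_subset_Icc_self hx), funext hr, betaOp_comp_one_sub n (fun t => q.eval t),
      hq _ hx', bernsteinBasis_sub_one_sub hi]
  have hpr : p = r := betaOpPoly_injective hn0 <|
    eq_of_infinite_eval_eq _ _ ((Set.Ioo_infinite zero_lt_one).mono hagree)
  intro x _
  rw [hpr, hr]
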